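/- Let T be a discourse tree over m EDUs with m ≥ 2. Consider the stack-based decoding procedure that initializes a stack with the span (0,m) and repeatedly: pops a span (i,j) from the stack, looks up the unique triple (i,k,j) ∈ S_edu(T) with outer span (i,j), pushes (k,j) onto the stack if j − k > 1, and then pushes (i,k) onto the stack if k − i > 1. This procedure terminates after exactly m − 1 iterations, during which each internal-node span of T is popped exactly once and the set of triples looked up is exactly S_edu(T). -/

import Mathlib

/-- A discourse tree over the EDU interval `(i, j)`: a full binary tree whose
nodes are labeled by intervals, leaves are labeled `(i, i+1)`, and every
internal node labeled `(i, j)` has two children labeled `(i, k)` and `(k, j)`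
for some `i < k < j`.  A discourse tree over `m` EDUs is a `DTree 0 m`. -/
inductive DTree : ℕ → ℕ → Type
  | leaf (i : ℕ) : DTree i (i + 1)
  | node {i k j : ℕ} : DTree i k → DTree k j → DTree i j

/-- The splitting-decision set `S_edu(T)`. -/
def DTree.splits : {i j : ℕ} → DTree i j → Finset (ℕ × ℕ × ℕ)
  | _, _, DTree.leaf _ => ∅
  | _, _, @DTree.node i k j l r => insert (i, k, j) (l.splits ∪ r.splits)

/-- The set of spans labeling the internal nodes of the tree. -/
def DTree.internalSpans : {i j : ℕ} → DTree i j → Finset (ℕ × ℕ)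
  | _, _, DTree.leaf _ => ∅
  | _, _, @DTree.node i _ j l r => insert (i, j) (l.internalSpans ∪ r.internalSpans)

/-- One iteration of the stack-based decoding procedure, where `f` performs
the lookup of the split point of a span.  The state is a pair of the stack of
spans and the list of triples looked up so far.  The procedure pops a span
`(i, j)` from the stack, looks up the split point `k = f (i, j)` (recording
the triple `(i, k, j)`), pushes `(k, j)` onto the stack if `j − k > 1`, and
then pushes `(i, k)` onto the stack if `k − i > 1`.  On an empty stack it does
nothing. -/
def decodeStep (f : ℕ × ℕ → ℕ) :
    List (ℕ × ℕ) × List (ℕ × ℕ × ℕ) → List (ℕ × ℕ) × List (ℕ × ℕ × ℕ)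
  | ([], acc) => ([], acc)
  | ((i, j) :: st, acc) =>
      let k := f (i, j)
      let st1 := if 1 < j - k then (k, j) :: st else st
      let st2 := if 1 < k - i then (i, k) :: st1 else st1
      (st2, (i, k, j) :: acc)

/-! The decoder simulates a preorder traversal of `T`: popping the span of a subtree, pushing
its two children (leaves are never pushed) and then running for as many steps as the subtree
has internal nodes restores the stack below and prepends that subtree's preorder list of
split triples to the accumulator. A tree over `m` EDUs has `m - 1` internal nodes, and since
an empty stack freezes the accumulator, the stack cannot run empty before step `m - 1`. -/

namespace DTree

def preorder : {i j : ℕ} → DTree i j → List (ℕ × ℕ × ℕ)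
  | _, _, leaf _ => []
  | _, _, @node i k j l r => (i, k, j) :: (l.preorder ++ r.preorder)

theorem lt : ∀ {i j : ℕ}, DTree i j → i < j
  | _, _, leaf i => Nat.lt_succ_self i
  | _, _, node l r => l.lt.trans r.lt

theorem length_preorder : ∀ {i j : ℕ} (T : DTree i j), T.preorder.length = j - i - 1
  | _, _, leaf _ => by simp [preorder]
  | _, _, node l r => by
    have := l.lt
    have := r.lt
    simp only [preorder, List.length_cons, List.length_append, l.length_preorder,
      r.length_preorder]
    omega

theorem toFinset_preorder : ∀ {i j : ℕ} (T : DTree i j), T.preorder.toFinset = T.splits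
  | _, _, leaf _ => rfl
  | _, _, node l r => by
    simp [preorder, splits, l.toFinset_preorder, r.toFinset_preorder]

theorem toFinset_map_preorder : ∀ {i j : ℕ} (T : DTree i j),
    (T.preorder.map (fun x => (x.1, x.2.2))).toFinset = T.internalSpans
  | _, _, leaf _ => rfl
  | _, _, node l r => by
    simp [preorder, internalSpans, l.toFinset_map_preorder, r.toFinset_map_preorder]

theorem bounds_of_mem_preorder : ∀ {i j a b c : ℕ} (T : DTree i j),
    (a, b, c) ∈ T.preorder → i ≤ a ∧ a < b ∧ b < c ∧ c ≤ j
  | _, _, _, _, _, leaf _, h => by simp [preorder] at h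
  | _, _, _, _, _, node l r, h => by
    have := l.lt
    have := r.lt
    simp only [preorder, List.mem_cons, List.mem_append, Prod.mk.injEq] at h
    rcases h with ⟨rfl, rfl, rfl⟩ | h | h
    · omega
    · have := l.bounds_of_mem_preorder h; omega
    · have := r.bounds_of_mem_preorder h; omega

theorem nodup_map_preorder : ∀ {i j : ℕ} (T : DTree i j),
    (T.preorder.map (fun x => (x.1, x.2.2))).Nodup
  | _, _, leaf _ => List.nodup_nil
  | _, _, @node i k j l r => by
    simp only [preorder, List.map_cons, List.map_append, List.nodup_cons, List.mem_append,
      List.mem_map, Prod.mk.injEq, Prod.exists]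
    refine ⟨?_, l.nodup_map_preorder.append r.nodup_map_preorder ?_⟩
    · rintro (⟨a, b, c, hmem, rfl, rfl⟩ | ⟨a, b, c, hmem, rfl, rfl⟩)
      · have := r.lt; have := l.bounds_of_mem_preorder hmem; omega
      · have := l.lt; have := r.bounds_of_mem_preorder hmem; omega
    · rintro _ hl hr
      obtain ⟨⟨a, b, c⟩, hmem, rfl⟩ := List.mem_map.1 hl
      obtain ⟨⟨a', b', c'⟩, hmem', he⟩ := List.mem_map.1 hr
      have := l.bounds_of_mem_preorder hmem
      have := r.bounds_of_mem_preorder hmem'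
      simp only [Prod.mk.injEq] at he
      omega

end DTree

def pushSpan (i j : ℕ) (st : List (ℕ × ℕ)) : List (ℕ × ℕ) :=
  if 1 < j - i then (i, j) :: st else st

section decodeStep

variable {f : ℕ × ℕ → ℕ}

theorem decodeStep_cons (i j : ℕ) (st : List (ℕ × ℕ)) (acc : List (ℕ × ℕ × ℕ)) :
    decodeStep f ((i, j) :: st, acc) =
      (pushSpan i (f (i, j)) (pushSpan (f (i, j)) j st), (i, f (i, j), j) :: acc) :=
  rfl

theorem length_snd_iterate_decodeStep_le (n : ℕ)
    (s : List (ℕ × ℕ) × List (ℕ × ℕ × ℕ)) :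
    ((decodeStep f)^[n] s).2.length ≤ n + s.2.length := by
  induction n generalizing s with
  | zero => simp
  | succ n ih =>
    rw [Function.iterate_succ_apply]
    refine (ih _).trans ?_
    obtain ⟨_ | ⟨⟨i, j⟩, st⟩, acc⟩ := s
    · simp [decodeStep]
    · simp only [decodeStep_cons, List.length_cons]
      omega

theorem fst_iterate_decodeStep_ne_nil {n t : ℕ}
    {s : List (ℕ × ℕ) × List (ℕ × ℕ × ℕ)}
    (hn : ((decodeStep f)^[n] s).2.length = n + s.2.length) (ht : t < n) :
    ((decodeStep f)^[t] s).1 ≠ [] := by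
  intro hnil
  have hfrozen : (decodeStep f)^[n] s = (decodeStep f)^[t] s := by
    obtain ⟨d, rfl⟩ := Nat.exists_eq_add_of_le ht.le
    have hfix : decodeStep f ((decodeStep f)^[t] s) = (decodeStep f)^[t] s := by
      rw [← Prod.mk.eta (p := (decodeStep f)^[t] s), hnil]
      rfl
    rw [add_comm, Function.iterate_add_apply, Function.iterate_fixed hfix]
  have := length_snd_iterate_decodeStep_le (f := f) t s
  rw [hfrozen] at hn
  omega

theorem DTree.iterate_decodeStep_preorder : ∀ {i j : ℕ} (T : DTree i j),
    (∀ a b c : ℕ, (a, b, c) ∈ T.splits → f (a, c) = b) →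
    ∀ (st : List (ℕ × ℕ)) (acc : List (ℕ × ℕ × ℕ)),
    (decodeStep f)^[T.preorder.length] (pushSpan i j st, acc) = (st, T.preorder.reverse ++ acc)
  | _, _, DTree.leaf _, _, st, acc => by simp [DTree.preorder, pushSpan]
  | _, _, @DTree.node i k j l r, hf, st, acc => by
    have hk : f (i, j) = k := hf i k j (by simp [DTree.splits])
    have hpush : pushSpan i j st = (i, j) :: st :=
      if_pos (by have := l.lt; have := r.lt; omega)
    have hlen : (l.node r).preorder.length = r.preorder.length + (l.preorder.length + 1) := by
      simp only [DTree.preorder, List.length_cons, List.length_append]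
      omega
    rw [hpush, hlen, Function.iterate_add_apply, Function.iterate_succ_apply, decodeStep_cons,
      hk, l.iterate_decodeStep_preorder (fun a b c h => hf a b c (by simp [DTree.splits, h])),
      r.iterate_decodeStep_preorder (fun a b c h => hf a b c (by simp [DTree.splits, h]))]
    simp [DTree.preorder]

end decodeStep

/-- Let `T` be a discourse tree over `m` EDUs (`m ≥ 2`), and let `f` be the
lookup function returning, for each internal-node span `(i, j)` of `T`, the
unique `k` with `(i, k, j) ∈ S_edu(T)`.  Then the stack-based decoding
procedure started from the stack `[(0, m)]`: (1) has a nonempty stack at every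
iteration before the `(m−1)`-st, (2) terminates with an empty stack after
exactly `m − 1` iterations, having looked up a list `L` of `m − 1` triples in
which each internal-node span of `T` occurs as an outer span exactly once
(the popped spans are exactly the internal-node spans of `T`, each popped
once), and the set of triples looked up is exactly `S_edu(T)`. -/
theorem stack_decoding_correct (m : ℕ) (hm : 2 ≤ m) (T : DTree 0 m)
    (f : ℕ × ℕ → ℕ) (hf : ∀ i k j : ℕ, (i, k, j) ∈ T.splits → f (i, j) = k) :
    (∀ t : ℕ, t < m - 1 → ((decodeStep f)^[t] ([(0, m)], [])).1 ≠ []) ∧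
    ∃ L : List (ℕ × ℕ × ℕ),
      (decodeStep f)^[m - 1] ([(0, m)], []) = ([], L) ∧
      L.length = m - 1 ∧
      (L.map (fun x => (x.1, x.2.2))).Nodup ∧
      (L.map (fun x => (x.1, x.2.2))).toFinset = T.internalSpans ∧
      L.toFinset = T.splits := by
  have hlen : T.preorder.length = m - 1 := by rw [T.length_preorder]; omega
  have hrun : (decodeStep f)^[m - 1] ([(0, m)], []) = ([], T.preorder.reverse) := by
    have hpush : pushSpan 0 m [] = [(0, m)] := if_pos (by omega)
    simpa [hlen, hpush] using T.iterate_decodeStep_preorder hf [] []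
  refine ⟨fun t ht => fst_iterate_decodeStep_ne_nil (by simp [hrun, hlen]) ht,
    T.preorder.reverse, hrun, by simp [hlen], ?_, ?_, ?_⟩
  · simpa [List.map_reverse] using List.nodup_reverse.2 T.nodup_map_preorder
  · simp [List.map_reverse, T.toFinset_map_preorder]
  · simp [T.toFinset_preorder]
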